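/- Let Γ be a graph with vertex set V admitting a σ-projection Π for some σ ∈ V, and let R ⊆ V be a nonempty finite Π-convex subset. Then the subgraph of Γ induced on R is dismantlable. -/

import Mathlib

open SimpleGraph

variable {V : Type*}

/-- The closed neighbourhood of a vertex: the vertex together with all its neighbours. -/
def closedNbhd (G : SimpleGraph V) (ρ : V) : Set V := insert ρ {w | G.Adj ρ w}

/-- `ρ` is dominated by `π` within the subgraph of `G` induced on `S`:
`π ∈ S`, `π ≠ ρ`, and `N(ρ) ∩ S ⊆ N(π)`. -/
def DominatedIn (G : SimpleGraph V) (S : Set V) (ρ π : V) : Prop :=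
  π ∈ S ∧ π ≠ ρ ∧ ∀ w ∈ S, w ∈ closedNbhd G ρ → w ∈ closedNbhd G π

/-- The subgraph of `G` induced on `S` is dismantlable: the vertices of `S` can be
arranged in a (finite) list such that each vertex except the last is dominated in the
subgraph induced on it and the later vertices. -/
def DismantlableOn (G : SimpleGraph V) (S : Set V) : Prop :=
  ∃ l : List V, l.Nodup ∧ (∀ v, v ∈ l ↔ v ∈ S) ∧
    ∀ (i : ℕ) (h : i < l.length), i < l.length - 1 →
      ∃ π, DominatedIn G {w | w ∈ l.drop i} (l[i]'h) π

/-- A graph is dismantlable if the subgraph induced on all of its vertices is. -/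
def Dismantlable (G : SimpleGraph V) : Prop := DismantlableOn G Set.univ

/-- The set `Π*(ρ)` of all vertices appearing in pairs of `Π ρ`. -/
def PiStar (Pr : V → Finset (Sym2 V)) (ρ : V) : Set V := {v | ∃ p ∈ Pr ρ, v ∈ p}

/-- `Pr` is a `σ`-projection: it assigns to each vertex `ρ ≠ σ` a nonempty finite set of
unordered pairs of vertices such that (i) every finite set `R` containing a vertex other
than `σ` has an exposed vertex, and (ii) there is no cycle `ρ₀, …, ρ_{m-1}` with
`ρ_{i+1} ∈ Π*(ρ_i)` (indices mod `m`). -/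
structure IsSigmaProjection (G : SimpleGraph V) (σ : V) (Pr : V → Finset (Sym2 V)) : Prop where
  nonempty : ∀ ρ, ρ ≠ σ → (Pr ρ).Nonempty
  exposed : ∀ R : Finset V, (∃ ρ ∈ R, ρ ≠ σ) →
    ∃ ρ ∈ R, ρ ≠ σ ∧ ∃ p ∈ Pr ρ, ∀ π ∈ p,
      ∀ w ∈ R, w ∈ closedNbhd G ρ → w ∈ closedNbhd G π
  acyclic : ¬ ∃ m : ℕ, 0 < m ∧ ∃ f : ZMod m → V,
    ∀ i, f i ≠ σ ∧ f (i + 1) ∈ PiStar Pr (f i)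

/-- `R` is `Π`-convex: for every `ρ ∈ R` other than `σ`, each pair in `Π ρ` meets `R`. -/
def PiConvex (σ : V) (Pr : V → Finset (Sym2 V)) (R : Set V) : Prop :=
  ∀ ρ ∈ R, ρ ≠ σ → ∀ p ∈ Pr ρ, ∃ v ∈ p, v ∈ R

/-- The orbit `HR` of a set `R` under a group action. -/
def orbitSet (H : Type*) [Group H] [MulAction H V] (R : Set V) : Set V :=
  {x | ∃ h : H, ∃ ρ ∈ R, x = h • ρ}

/-- The geometric realization of the flag complex of `G` inside `ℝ^V`: the union over
all (nonempty) cliques of the convex hulls of the corresponding standard basis vectors. -/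
def flagRealization [DecidableEq V] (G : SimpleGraph V) : Set (V → ℝ) :=
  ⋃ (Δ : Set V) (_ : Δ.Nonempty) (_ : G.IsClique Δ),
    convexHull ℝ ((fun v => (Pi.single v 1 : V → ℝ)) '' Δ)

/-- A walk is a geodesic if its length equals the distance between its endpoints. -/
def IsGeodesic (G : SimpleGraph V) {u v : V} (p : G.Walk u v) : Prop :=
  p.length = G.dist u v

/-- `G` is `δ`-hyperbolic: for any geodesic triangle, each vertex on one side is within
distance `δ` of some vertex on the union of the other two sides. -/
def Hyperbolic (G : SimpleGraph V) (δ : ℕ) : Prop :=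
  ∀ (u v w : V) (p : G.Walk u v) (q : G.Walk v w) (r : G.Walk w u),
    IsGeodesic G p → IsGeodesic G q → IsGeodesic G r →
    ∀ t ∈ p.support, ∃ s, (s ∈ q.support ∨ s ∈ r.support) ∧ G.dist t s ≤ δ

/-- The Rips graph `Γ_D`: same vertices, two distinct vertices adjacent iff their
graph distance in `G` is at most `D`. -/
def ripsGraph (G : SimpleGraph V) (D : ℕ) : SimpleGraph V where
  Adj u v := u ≠ v ∧ G.dist u v ≤ D
  symm := by
    constructor
    intro u v h
    exact ⟨h.1.symm, by rw [SimpleGraph.dist_comm]; exact h.2⟩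
  loopless := by
    constructor
    intro v h
    exact h.1 rfl

/-- The ball of radius `r` around a set `C` of vertices. -/
def ballSet (G : SimpleGraph V) (C : Set V) (r : ℕ) : Set V :=
  {v | ∃ c ∈ C, G.dist v c ≤ r}

/-!
Removing exposed vertices one at a time orders `R` so that every vertex other than `σ` (which
can only come last) is exposed among itself and its successors. Let `ρ` be a vertex of this
order, `T` the set of `ρ` and its successors, and `P` the set of `ρ` and its predecessors `x`
with `N(ρ) ∩ T ⊆ N(x)`. Acyclicity of `Π` gives `x ∈ P` with no `Π*`-successor in `P`. By
convexity a member `v` of an exposing pair of `x` lies in `R`; it satisfies `N(ρ) ∩ T ⊆ N(v)`,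
so `v ∉ P` forces `v ∈ T ∖ {ρ}`, and `v` dominates `ρ` in `T`.
-/

open Function Set

theorem Function.IsPeriodicPt.iterate_val_add_one {α : Type*} {g : α → α} {m : ℕ} [NeZero m]
    {y : α} (h : IsPeriodicPt g m y) (z : ZMod m) :
    g^[(z + 1).val] y = g (g^[z.val] y) := by
  have hz : z + 1 = ((z.val + 1 : ℕ) : ZMod m) := by push_cast [ZMod.natCast_zmod_val]; rfl
  rw [hz, ZMod.val_natCast, h.iterate_mod_apply, iterate_succ_apply']

theorem Set.MapsTo.exists_isPeriodicPt {α : Type*} {g : α → α} {P : Set α} (hg : MapsTo g P P)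
    (hP : P.Finite) {x : α} (hx : x ∈ P) : ∃ m, 0 < m ∧ ∃ y ∈ P, IsPeriodicPt g m y := by
  obtain ⟨a, b, hab, heq⟩ :=
    hP.exists_lt_map_eq_of_forall_mem (f := fun n => g^[n] x) fun n => hg.iterate n hx
  refine ⟨b - a, by omega, g^[a] x, hg.iterate a hx, ?_⟩
  change g^[b - a] (g^[a] x) = g^[a] x
  rw [← iterate_add_apply, Nat.sub_add_cancel hab.le]
  exact heq.symm

theorem dismantlableOn_of_forall_suffix {G : SimpleGraph V} {S : Set V} {l : List V}
    (hnd : l.Nodup) (hmem : ∀ v, v ∈ l ↔ v ∈ S)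
    (hdom : ∀ ρ t rest, ρ :: t :: rest <:+ l → ∃ π, DominatedIn G {w | w ∈ ρ :: t :: rest} ρ π) :
    DismantlableOn G S := by
  refine ⟨l, hnd, hmem, fun i hi hlt => ?_⟩
  have hdrop : l.drop i = l[i] :: l[i + 1] :: l.drop (i + 2) := by
    rw [List.drop_eq_getElem_cons hi, List.drop_eq_getElem_cons (by omega)]
  rw [hdrop]
  exact hdom _ _ _ (hdrop ▸ List.drop_suffix i l)

def IsExposedIn (G : SimpleGraph V) (Pr : V → Finset (Sym2 V)) (T : Set V) (ρ : V) : Prop :=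
  ∃ p ∈ Pr ρ, ∀ π ∈ p, ∀ w ∈ T, w ∈ closedNbhd G ρ → w ∈ closedNbhd G π

theorem IsExposedIn.mono {G : SimpleGraph V} {Pr : V → Finset (Sym2 V)} {T T' : Set V} {ρ : V}
    (h : IsExposedIn G Pr T ρ) (hT : T' ⊆ T) : IsExposedIn G Pr T' ρ :=
  let ⟨p, hp, hdom⟩ := h
  ⟨p, hp, fun π hπ w hw => hdom π hπ w (hT hw)⟩

def IsExposureOrder (G : SimpleGraph V) (σ : V) (Pr : V → Finset (Sym2 V)) (l : List V) : Prop :=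
  ∀ x s, x :: s <:+ l → (x = σ → s = []) ∧ (x ≠ σ → IsExposedIn G Pr {w | w ∈ x :: s} x)

theorem IsExposureOrder.forall_mem_prefix_isExposedIn {G : SimpleGraph V} {σ : V}
    {Pr : V → Finset (Sym2 V)} {pre s : List V} {ρ : V}
    (h : IsExposureOrder G σ Pr (pre ++ ρ :: s)) (hs : s ≠ []) :
    ∀ x ∈ pre ++ [ρ], x ≠ σ ∧ IsExposedIn G Pr {w | w ∈ ρ :: s} x := by
  have hexp : ∀ x s', x :: s' <:+ pre ++ ρ :: s → s' ≠ [] →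
      x ≠ σ ∧ IsExposedIn G Pr {w | w ∈ x :: s'} x := fun x s' hsuf hs' =>
    have hσ : x ≠ σ := fun hx => hs' ((h x s' hsuf).1 hx)
    ⟨hσ, (h x s' hsuf).2 hσ⟩
  intro x hx
  rcases List.mem_append.1 hx with hx | hx
  · obtain ⟨a, b, rfl⟩ := List.append_of_mem hx
    obtain ⟨hσ, hx⟩ := hexp x (b ++ ρ :: s) ⟨a, by simp⟩ (by simp)
    exact ⟨hσ, hx.mono fun w hw => List.mem_cons_of_mem x (List.mem_append_right b hw)⟩
  · obtain rfl := List.mem_singleton.1 hx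
    exact hexp x s (List.suffix_append pre _) hs

namespace IsSigmaProjection

variable {G : SimpleGraph V} {σ : V} {Pr : V → Finset (Sym2 V)}

theorem exists_forall_notMem_piStar (hPr : IsSigmaProjection G σ Pr) {P : Set V}
    (hP : P.Finite) (hne : P.Nonempty) (hσ : σ ∉ P) :
    ∃ x ∈ P, ∀ y ∈ P, y ∉ PiStar Pr x := by
  by_contra! h
  choose! g hgP hgPi using h
  obtain ⟨x, hx⟩ := hne
  obtain ⟨m, hm, y, hy, hper⟩ := MapsTo.exists_isPeriodicPt (fun x hx => hgP x hx) hP hx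
  have : NeZero m := ⟨hm.ne'⟩
  have horbit : ∀ n, g^[n] y ∈ P := fun n => MapsTo.iterate (fun x hx => hgP x hx) n hy
  refine hPr.acyclic ⟨m, hm, fun z => g^[z.val] y, fun z => ⟨?_, ?_⟩⟩
  · exact fun h => hσ (h ▸ horbit _)
  · simp only [hper.iterate_val_add_one]
    exact hgPi _ (horbit _)

theorem exists_dominatedIn (hPr : IsSigmaProjection G σ Pr) {R E T : Set V} {ρ : V}
    (hconv : PiConvex σ Pr R) (hE : E.Finite) (hER : E ⊆ R) (hRET : R ⊆ E ∪ T) (hσE : σ ∉ E)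
    (hexp : ∀ x ∈ E, IsExposedIn G Pr T x) (hρ : ρ ∈ E) :
    ∃ π, DominatedIn G T ρ π := by
  set P := {x ∈ E | ∀ w ∈ T, w ∈ closedNbhd G ρ → w ∈ closedNbhd G x}
  obtain ⟨x, ⟨hxE, hρx⟩, hsink⟩ := hPr.exists_forall_notMem_piStar (hE.subset (sep_subset _ _))
    (⟨ρ, hρ, fun _ _ => id⟩ : P.Nonempty) (fun h => hσE h.1)
  obtain ⟨p, hp, hpx⟩ := hexp x hxE
  obtain ⟨v, hvp, hvR⟩ := hconv x (hER hxE) (ne_of_mem_of_not_mem hxE hσE) p hp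
  have hρv : ∀ w ∈ T, w ∈ closedNbhd G ρ → w ∈ closedNbhd G v :=
    fun w hw hwρ => hpx v hvp w hw (hρx w hw hwρ)
  have hvE : v ∉ E := fun hvE => hsink v ⟨hvE, hρv⟩ ⟨p, hp, hvp⟩
  exact ⟨v, (hRET hvR).resolve_left hvE, fun h => hvE (h ▸ hρ), hρv⟩

theorem exists_isExposureOrder [DecidableEq V] (hPr : IsSigmaProjection G σ Pr) (S : Finset V) :
    ∃ l : List V, l.Nodup ∧ (∀ v, v ∈ l ↔ v ∈ S) ∧ IsExposureOrder G σ Pr l := by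
  induction S using Finset.strongInduction with
  | _ S ih =>
    by_cases hex : ∃ ρ ∈ S, ρ ≠ σ
    · obtain ⟨ρ, hρS, hρσ, hρ⟩ := hPr.exposed S hex
      obtain ⟨l, hnd, hmem, hord⟩ := ih (S.erase ρ) (Finset.erase_ssubset hρS)
      refine ⟨ρ :: l, List.nodup_cons.2 ⟨by simp [hmem], hnd⟩, fun v => ?_, ?_⟩
      · by_cases hv : v = ρ <;> simp [hmem, hv, hρS]
      · intro x s hsuf
        rcases List.suffix_cons_iff.1 hsuf with heq | hsuf
        · obtain ⟨rfl, rfl⟩ := List.cons_eq_cons.1 heq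
          refine ⟨fun h => absurd h hρσ, fun _ => IsExposedIn.mono (T := (S : Set V)) hρ ?_⟩
          intro w hw
          rcases List.mem_cons.1 hw with rfl | hw
          exacts [hρS, Finset.mem_of_mem_erase ((hmem w).1 hw)]
        · exact hord x s hsuf
    · simp only [not_exists, not_and, not_not] at hex
      rcases Finset.subset_singleton_iff.1 fun x hx => Finset.mem_singleton.2 (hex x hx)
        with rfl | rfl
      · exact ⟨[], List.nodup_nil, by simp, fun x s h => by simp at h⟩
      · refine ⟨[σ], List.nodup_singleton σ, by simp, fun x s h => ?_⟩
        obtain ⟨rfl, rfl⟩ : x = σ ∧ s = [] := by simpa [List.suffix_cons_iff] using h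
        exact ⟨fun _ => rfl, fun h => absurd rfl h⟩

end IsSigmaProjection

theorem dismantlableOn_of_piConvex {V : Type*} (G : SimpleGraph V)
    (σ : V) (Pr : V → Finset (Sym2 V)) (hPr : IsSigmaProjection G σ Pr)
    (R : Set V) (hfin : R.Finite) (hconv : PiConvex σ Pr R) :
    DismantlableOn G R := by
  classical
  obtain ⟨l, hnd, hmem, hord⟩ := hPr.exists_isExposureOrder hfin.toFinset
  simp only [Finite.mem_toFinset] at hmem
  refine dismantlableOn_of_forall_suffix hnd hmem fun ρ t rest hsuf => ?_
  obtain ⟨pre, rfl⟩ := hsuf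
  have hexp := hord.forall_mem_prefix_isExposedIn (List.cons_ne_nil t rest)
  refine hPr.exists_dominatedIn (E := {x | x ∈ pre ++ [ρ]}) hconv (List.finite_toSet _)
    (fun x hx => (hmem x).1 ?_) (fun x hx => ?_) (fun hσ => (hexp σ hσ).1 rfl)
    (fun x hx => (hexp x hx).2) (by simp)
  · simp only [mem_ofPred_eq, List.mem_append, List.mem_cons] at hx ⊢
    tauto
  · have := (hmem x).2 hx
    simp only [mem_union, mem_ofPred_eq, List.mem_append, List.mem_cons] at this ⊢
    tauto
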